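/- For all α, β ∈ [0, 1/2), the function c_{α,β} is a valid copula density: c_{α,β}(u,v) ≥ 0 for all (u,v) ∈ [0,1]², ∫₀¹ c_{α,β}(u,v) dv = 1 for every u ∈ [0,1], and ∫₀¹ c_{α,β}(u,v) du = 1 for every v ∈ [0,1]; consequently C_{α,β}(u,v) := ∫₀ᵘ∫₀ᵛ c_{α,β}(x,y) dy dx is a bivariate copula. -/

import Mathlib

open MeasureTheory Set

noncomputable section

def IsCopula (C : ℝ → ℝ → ℝ) : Prop :=
  (∀ u ∈ Icc (0:ℝ) 1, ∀ v ∈ Icc (0:ℝ) 1, C u v ∈ Icc (0:ℝ) 1) ∧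
  (∀ u ∈ Icc (0:ℝ) 1, C u 0 = 0 ∧ C u 1 = u) ∧
  (∀ v ∈ Icc (0:ℝ) 1, C 0 v = 0 ∧ C 1 v = v) ∧
  (∀ u₁ ∈ Icc (0:ℝ) 1, ∀ u₂ ∈ Icc (0:ℝ) 1, ∀ v₁ ∈ Icc (0:ℝ) 1, ∀ v₂ ∈ Icc (0:ℝ) 1,
    u₁ ≤ u₂ → v₁ ≤ v₂ → 0 ≤ C u₂ v₂ - C u₁ v₂ - C u₂ v₁ + C u₁ v₁)

/-- The (a.e. defined) partial derivative of `C` with respect to its first argument. -/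
def d1 (C : ℝ → ℝ → ℝ) (t v : ℝ) : ℝ := deriv (fun s => C s v) t

/-- Chatterjee's rank correlation. -/
def xi (C : ℝ → ℝ → ℝ) : ℝ :=
  6 * (∫ v in (0:ℝ)..1, ∫ t in (0:ℝ)..1, (d1 C t v) ^ 2) - 2

/-- Spearman's footrule. -/
def psi (C : ℝ → ℝ → ℝ) : ℝ :=
  6 * (∫ v in (0:ℝ)..1, C v v) - 2

/-- Stochastically increasing: for each `v`, `t ↦ ∂₁C(t,v)` agrees a.e. on `[0,1]`
with a non-increasing function. -/
def IsSI (C : ℝ → ℝ → ℝ) : Prop :=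
  ∀ v ∈ Icc (0:ℝ) 1, ∃ g : ℝ → ℝ, AntitoneOn g (Icc (0:ℝ) 1) ∧
    (∀ᵐ t ∂(volume.restrict (Icc (0:ℝ) 1)), d1 C t v = g t)

/-- The lower boundary `ψ̃` of the zero-density strip. -/
def psiTilde (α β s : ℝ) : ℝ :=
  if s ≤ α then 0
  else if s < 1 - α then (1 - β) * (s - α) / (1 - 2 * α)
  else 1 - β

/-- The zero-density strip `H_{α,β} ⊆ [0,1]²`. -/
def Hstrip (α β : ℝ) : Set (ℝ × ℝ) :=
  {p : ℝ × ℝ | p.1 ∈ Icc (0:ℝ) 1 ∧ p.2 ∈ Icc (0:ℝ) 1 ∧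
    psiTilde α β p.1 ≤ p.2 ∧ p.2 ≤ psiTilde α β p.1 + β}

/-- The horizontal width `L(t)` of the strip at height `t`. -/
def Lwidth (α β t : ℝ) : ℝ :=
  ∫ s in (0:ℝ)..1, (if psiTilde α β s ≤ t ∧ t ≤ psiTilde α β s + β then (1:ℝ) else 0)

/-- The density `f_T(t) = (1 − L(t))/(1 − β)`. -/
def fT (α β t : ℝ) : ℝ := (1 - Lwidth α β t) / (1 - β)

/-- The distribution function `F_T(v) = ∫₀ᵛ f_T(x) dx`. -/
def FT (α β v : ℝ) : ℝ := ∫ x in (0:ℝ)..v, fT α β x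

/-- The quantile (generalized inverse) function of `F_T`. -/
def FTinv (α β v : ℝ) : ℝ := sInf {x : ℝ | x ∈ Icc (0:ℝ) 1 ∧ v ≤ FT α β x}

/-- The two-parameter density
`c_{α,β}(u,v) = 𝟙_{(u, F_T⁻¹(v)) ∉ H_{α,β}} / ((1−β)·f_T(F_T⁻¹(v)))`. -/
def cTwoParam (α β u v : ℝ) : ℝ :=
  ((Hstrip α β)ᶜ.indicator (fun _ => (1:ℝ)) (u, FTinv α β v)) / ((1 - β) * fT α β (FTinv α β v))

/-- The associated copula `C_{α,β}(u,v) = ∫₀ᵘ∫₀ᵛ c_{α,β}(x,y) dy dx`. -/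
def CTwoParam (α β u v : ℝ) : ℝ :=
  ∫ x in (0:ℝ)..u, ∫ y in (0:ℝ)..v, cTwoParam α β x y

set_option linter.unusedSectionVars false






set_option linter.unusedSectionVars false
section Basic
variable {α β : ℝ} (hα : α ∈ Ico (0:ℝ) (1/2)) (hβ : β ∈ Ico (0:ℝ) (1/2))
include hα hβ

lemma psiT_nonneg (s : ℝ) : 0 ≤ psiTilde α β s := by
  unfold psiTilde
  have h2a : (0:ℝ) < 1 - 2*α := by linarith [hα.2]
  have hb : (0:ℝ) < 1 - β := by linarith [hβ.2]
  split_ifs with h1 h2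
  · exact le_refl _
  · have h3 : α < s := not_le.1 h1
    have : 0 ≤ (1-β)*(s-α) := by nlinarith
    positivity
  · linarith

lemma psiT_le (s : ℝ) : psiTilde α β s ≤ 1 - β := by
  unfold psiTilde
  have h2a : (0:ℝ) < 1 - 2*α := by linarith [hα.2]
  have hb : (0:ℝ) < 1 - β := by linarith [hβ.2]
  split_ifs with h1 h2
  · linarith
  · rw [div_le_iff₀ h2a]
    have : s - α ≤ 1 - 2*α := by linarith [not_le.1 h1, h2]
    nlinarith
  · exact le_refl _

/-- upper contrapositive: beyond `α + t μ'` the boundary exceeds `t`. -/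
lemma psiT_gt {s t : ℝ} (ht0 : 0 ≤ t) (ht1 : t < 1 - β)
    (hs : α + t * ((1 - 2*α)/(1 - β)) < s) : t < psiTilde α β s := by
  have h2a : (0:ℝ) < 1 - 2*α := by linarith [hα.2]
  have hb : (0:ℝ) < 1 - β := by linarith [hβ.2]
  have hsα : α < s := by nlinarith [mul_nonneg ht0 (div_nonneg h2a.le hb.le)]
  unfold psiTilde
  rw [if_neg (not_le.2 hsα)]
  split_ifs with h2
  · rw [lt_div_iff₀ h2a]
    have : t * ((1-2*α)/(1-β)) < s - α := by linarith
    calc t * (1 - 2*α) = (t * ((1-2*α)/(1-β))) * (1-β) := by field_simp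
    _ < (s - α) * (1-β) := by nlinarith
    _ = (1-β)*(s-α) := by ring
  · exact ht1

/-- lower contrapositive: below `α + t μ'` the boundary is below `t`. -/
lemma psiT_lt {s t : ℝ} (ht0 : 0 < t)
    (hs : s < α + t * ((1 - 2*α)/(1 - β))) : psiTilde α β s < t := by
  have h2a : (0:ℝ) < 1 - 2*α := by linarith [hα.2]
  have hb : (0:ℝ) < 1 - β := by linarith [hβ.2]
  unfold psiTilde
  split_ifs with h1 h2
  · exact ht0
  · rw [div_lt_iff₀ h2a]
    have : s - α < t * ((1-2*α)/(1-β)) := by linarith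
    calc (1-β)*(s-α) < (1-β)*(t * ((1-2*α)/(1-β))) := by nlinarith
    _ = t * (1-2*α) := by field_simp
  · -- s ≥ 1-α, so 1-α ≤ s < α + tμ' ⇒ t > 1-β
    have h1a : 1 - α ≤ s := not_lt.1 h2
    have : 1 - 2*α < t * ((1-2*α)/(1-β)) := by linarith
    have h4 : t * ((1-2*α)/(1-β)) = t * (1-2*α) / (1-β) := by ring
    rw [h4, lt_div_iff₀ hb] at this
    nlinarith

omit hα hβ in
lemma psiT_measurable : Measurable (psiTilde α β) := by
  unfold psiTilde
  apply Measurable.ite (measurableSet_le measurable_id measurable_const) measurable_const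
  apply Measurable.ite (measurableSet_lt measurable_id measurable_const) _ measurable_const
  exact ((measurable_id.sub measurable_const).const_mul _).div_const _

end Basic





/-- integrand of `Lwidth`. -/
def eStrip (α β s t : ℝ) : ℝ :=
  if psiTilde α β s ≤ t ∧ t ≤ psiTilde α β s + β then (1:ℝ) else 0

/-- strip-width bound `M = α + β(1−2α)/(1−β)`. -/
def Mb (α β : ℝ) : ℝ := α + β * ((1 - 2*α)/(1 - β))

section L
variable {α β : ℝ} (hα : α ∈ Ico (0:ℝ) (1/2)) (hβ : β ∈ Ico (0:ℝ) (1/2))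
include hα hβ

lemma Mb_nonneg : 0 ≤ Mb α β := by
  have h2a : (0:ℝ) < 1 - 2*α := by linarith [hα.2]
  have hb : (0:ℝ) < 1 - β := by linarith [hβ.2]
  have := hα.1; have := hβ.1
  unfold Mb; positivity

lemma Mb_lt_one : Mb α β < 1 := by
  have h2a : (0:ℝ) < 1 - 2*α := by linarith [hα.2]
  have hb : (0:ℝ) < 1 - β := by linarith [hβ.2]
  unfold Mb
  have h7 : α + β * ((1 - 2*α)/(1 - β)) = (α * (1-β) + β*(1-2*α))/(1-β) := by
    field_simp
  rw [h7, div_lt_one hb]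
  nlinarith [hα.1, hβ.1, hα.2, hβ.2]

omit hα hβ in
lemma eStrip_meas : Measurable (fun p : ℝ × ℝ => eStrip α β p.1 p.2) := by
  unfold eStrip
  have h1 : Measurable fun p : ℝ × ℝ => psiTilde α β p.1 := (psiT_measurable).comp measurable_fst
  exact Measurable.ite
    (MeasurableSet.inter (measurableSet_le h1 measurable_snd)
      (measurableSet_le measurable_snd (h1.add_const β))) measurable_const measurable_const

omit hα hβ in
lemma eStrip_cases (s t : ℝ) : eStrip α β s t = 0 ∨
    (eStrip α β s t = 1 ∧ psiTilde α β s ≤ t ∧ t ≤ psiTilde α β s + β) := by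
  unfold eStrip
  split_ifs with h
  · exact Or.inr ⟨rfl, h⟩
  · exact Or.inl rfl

omit hα hβ in
lemma eStrip_nonneg (s t : ℝ) : 0 ≤ eStrip α β s t := by
  unfold eStrip; split_ifs <;> norm_num

omit hα hβ in
lemma eStrip_le_one (s t : ℝ) : eStrip α β s t ≤ 1 := by
  unfold eStrip; split_ifs <;> norm_num

omit hα hβ in
lemma eStrip_int (t : ℝ) : IntegrableOn (fun s => eStrip α β s t) (Ioc 0 1) volume := by
  refine ⟨((eStrip_meas (α := α) (β := β)).comp
    (measurable_id.prodMk measurable_const)).aestronglyMeasurable, ?_⟩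
  apply HasFiniteIntegral.of_bounded (C := 1)
  filter_upwards with s
  rw [Real.norm_eq_abs, abs_le]
  exact ⟨by linarith [eStrip_nonneg (α := α) (β := β) s t], eStrip_le_one s t⟩

omit hα hβ in
lemma eStrip_int_t (s : ℝ) : IntegrableOn (fun t => eStrip α β s t) (Ioc 0 1) volume := by
  refine ⟨((eStrip_meas (α := α) (β := β)).comp
    (measurable_const.prodMk measurable_id)).aestronglyMeasurable, ?_⟩
  apply HasFiniteIntegral.of_bounded (C := 1)
  filter_upwards with t
  rw [Real.norm_eq_abs, abs_le]
  exact ⟨by linarith [eStrip_nonneg (α := α) (β := β) s t], eStrip_le_one s t⟩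

omit hα hβ in
lemma Lwidth_eq (t : ℝ) : Lwidth α β t = ∫ s in Ioc (0:ℝ) 1, eStrip α β s t := by
  rw [Lwidth, intervalIntegral.integral_of_le (by norm_num)]; rfl

lemma Lwidth_nonneg (t : ℝ) : 0 ≤ Lwidth α β t := by
  rw [Lwidth_eq]
  exact setIntegral_nonneg measurableSet_Ioc fun s _ => eStrip_nonneg s t

set_option maxHeartbeats 1000000 in
/-- helper: bound the integral of `eStrip` by the length of a covering interval. -/
lemma Lwidth_le_of_subset {t a b : ℝ} (hab : a ≤ b)
    (h : ∀ s ∈ Ioc (0:ℝ) 1, eStrip α β s t = 1 → s ∈ Icc a b) :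
    Lwidth α β t ≤ b - a := by
  rw [Lwidth_eq]
  have hind : Integrable ((Icc a b).indicator fun _ => (1:ℝ)) (volume.restrict (Ioc 0 1)) :=
    (integrable_const 1).indicator measurableSet_Icc
  have h1 : ∫ s in Ioc (0:ℝ) 1, eStrip α β s t ≤
      ∫ s in Ioc (0:ℝ) 1, (Icc a b).indicator (fun _ => (1:ℝ)) s := by
    refine setIntegral_mono_on (eStrip_int t) hind measurableSet_Ioc fun s hs => ?_
    rcases eStrip_cases (α := α) (β := β) s t with he | he
    · rw [he]
      exact indicator_nonneg (fun _ _ => zero_le_one) s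
    · rw [he.1, indicator_of_mem (h s hs he.1)]
  refine h1.trans ?_
  rw [integral_indicator measurableSet_Icc, setIntegral_const, smul_eq_mul, mul_one,
    measureReal_def, Measure.restrict_apply measurableSet_Icc]
  calc (volume (Icc a b ∩ Ioc 0 1)).toReal ≤ (volume (Icc a b)).toReal := by
        apply ENNReal.toReal_mono (by simp) (measure_mono inter_subset_left)
  _ = b - a := by rw [Real.volume_Icc, ENNReal.toReal_ofReal (by linarith)]

lemma Lwidth_le (t : ℝ) : Lwidth α β t ≤ Mb α β := by
  have h2a : (0:ℝ) < 1 - 2*α := by linarith [hα.2]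
  have hb : (0:ℝ) < 1 - β := by linarith [hβ.2]
  have hμ : (0:ℝ) ≤ (1 - 2*α)/(1 - β) := by positivity
  have ha0 := hα.1; have hb0 := hβ.1
  set μ' := (1 - 2*α)/(1 - β) with hμ'
  have h5 : (1 - β) * μ' = 1 - 2*α := by rw [hμ']; field_simp
  have hcond : ∀ s t', eStrip α β s t' = 1 →
      psiTilde α β s ≤ t' ∧ t' ≤ psiTilde α β s + β := by
    intro s t' h1
    rcases eStrip_cases (α := α) (β := β) s t' with he | he
    · rw [he] at h1; norm_num at h1
    · exact he.2
  have hMnn := Mb_nonneg hα hβ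
  rcases lt_or_ge t 0 with ht | ht
  · have h9 : Lwidth α β t ≤ 0 - 0 := by
      apply Lwidth_le_of_subset hα hβ le_rfl
      intro s _ h1
      have h10 := (hcond s t h1).1
      have := psiT_nonneg hα hβ s
      linarith
    linarith
  rcases le_or_gt t β with ht1 | ht1
  · have h9 : Lwidth α β t ≤ (α + t * μ') - 0 := by
      apply Lwidth_le_of_subset hα hβ (by positivity)
      intro s hs h1
      refine ⟨hs.1.le, ?_⟩
      by_contra hgt
      have h11 := psiT_gt hα hβ ht (by linarith [hβ.2] : t < 1 - β) (not_le.1 hgt)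
      linarith [(hcond s t h1).1]
    have h12 : Lwidth α β t ≤ α + t * μ' := by linarith
    refine h12.trans ?_
    unfold Mb
    nlinarith
  rcases lt_or_ge t (1 - β) with ht2 | ht2
  · have h9 : Lwidth α β t ≤ (α + t * μ') - (α + (t - β) * μ') := by
      apply Lwidth_le_of_subset hα hβ (by nlinarith)
      intro s hs h1
      constructor
      · by_contra hlt
        have h11 := psiT_lt hα hβ (by linarith : (0:ℝ) < t - β) (not_le.1 hlt)
        linarith [(hcond s t h1).2]
      · by_contra hgt
        have h11 := psiT_gt hα hβ ht ht2 (not_le.1 hgt)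
        linarith [(hcond s t h1).1]
    have h12 : Lwidth α β t ≤ β * μ' := by linarith
    refine h12.trans ?_
    unfold Mb
    nlinarith
  rcases le_or_gt t 1 with ht3 | ht3
  · have hab : α + (t - β) * μ' ≤ 1 := by
      have h13 : (t - β) * μ' ≤ (1 - β) * μ' := by nlinarith
      nlinarith
    have h9 : Lwidth α β t ≤ 1 - (α + (t - β) * μ') := by
      apply Lwidth_le_of_subset hα hβ hab
      intro s hs h1
      refine ⟨?_, hs.2⟩
      by_contra hlt
      have h11 := psiT_lt hα hβ (by linarith : (0:ℝ) < t - β) (not_le.1 hlt)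
      linarith [(hcond s t h1).2]
    refine h9.trans ?_
    have h6 : (1 - 2*β) * μ' ≤ (t - β) * μ' := by nlinarith
    unfold Mb
    nlinarith
  · have h9 : Lwidth α β t ≤ 0 - 0 := by
      apply Lwidth_le_of_subset hα hβ le_rfl
      intro s _ h1
      have h10 := (hcond s t h1).2
      have := psiT_le hα hβ s
      linarith
    linarith

end L



instance ioc01_finite : IsFiniteMeasure (volume.restrict (Ioc (0:ℝ) 1)) :=
  ⟨by rw [Measure.restrict_apply_univ]; simp⟩

lemma integrableOn_of_bounded'' {f : ℝ → ℝ} (hm : Measurable f) {C : ℝ}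
    (hC : ∀ x, |f x| ≤ C) : IntegrableOn f (Ioc (0:ℝ) 1) volume :=
  ⟨hm.aestronglyMeasurable, HasFiniteIntegral.of_bounded (ae_of_all _ fun x => hC x)⟩

section L2
variable {α β : ℝ} (hα : α ∈ Ico (0:ℝ) (1/2)) (hβ : β ∈ Ico (0:ℝ) (1/2))
include hα hβ

/-- at each `s`, the vertical slice of the strip has measure `β`. -/
lemma slice_t (s : ℝ) : (∫ t in Ioc (0:ℝ) 1, eStrip α β s t) = β := by
  have hψ0 := psiT_nonneg hα hβ s
  have hψ1 := psiT_le hα hβ s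
  have hb0 := hβ.1
  have heq : (fun t => eStrip α β s t) =
      (Icc (psiTilde α β s) (psiTilde α β s + β)).indicator (fun _ => (1:ℝ)) := by
    funext t
    unfold eStrip
    rw [Set.indicator_apply]
    by_cases h : psiTilde α β s ≤ t ∧ t ≤ psiTilde α β s + β
    · rw [if_pos h, if_pos (mem_Icc.2 h)]
    · rw [if_neg h, if_neg (fun hm => h (mem_Icc.1 hm))]
  rw [heq, integral_indicator measurableSet_Icc, setIntegral_const, smul_eq_mul, mul_one,
    measureReal_def, Measure.restrict_apply measurableSet_Icc]
  have hsub1 : Ioc (psiTilde α β s) (psiTilde α β s + β) ⊆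
      Icc (psiTilde α β s) (psiTilde α β s + β) ∩ Ioc 0 1 := by
    intro t ht
    exact ⟨⟨ht.1.le, ht.2⟩, lt_of_le_of_lt hψ0 ht.1, by linarith [ht.2]⟩
  have hsub2 : Icc (psiTilde α β s) (psiTilde α β s + β) ∩ Ioc 0 1 ⊆
      Icc (psiTilde α β s) (psiTilde α β s + β) := inter_subset_left
  have hv : volume (Icc (psiTilde α β s) (psiTilde α β s + β) ∩ Ioc 0 1)
      = ENNReal.ofReal β := by
    refine le_antisymm ?_ ?_
    · refine (measure_mono hsub2).trans ?_
      rw [Real.volume_Icc]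
      simp
    · refine le_trans ?_ (measure_mono hsub1)
      rw [Real.volume_Ioc]
      simp
  rw [hv, ENNReal.toReal_ofReal hb0]

/-- membership in `Hstrip` for first coordinate in `[0,1]`. -/
lemma Hstrip_mem_iff {u : ℝ} (hu : u ∈ Icc (0:ℝ) 1) (t : ℝ) :
    ((u, t) ∈ Hstrip α β) ↔ (psiTilde α β u ≤ t ∧ t ≤ psiTilde α β u + β) := by
  have hψ0 := psiT_nonneg hα hβ u
  have hψ1 := psiT_le hα hβ u
  constructor
  · rintro ⟨-, -, h3, h4⟩; exact ⟨h3, h4⟩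
  · rintro ⟨h3, h4⟩
    exact ⟨hu, ⟨by linarith, by linarith⟩, h3, h4⟩

lemma indicator_compl_eq {u : ℝ} (hu : u ∈ Icc (0:ℝ) 1) (t : ℝ) :
    (Hstrip α β)ᶜ.indicator (fun _ => (1:ℝ)) (u, t) = 1 - eStrip α β u t := by
  unfold eStrip
  by_cases hc : psiTilde α β u ≤ t ∧ t ≤ psiTilde α β u + β
  · rw [Set.indicator_of_notMem, if_pos hc]
    · norm_num
    · rw [Set.notMem_compl_iff]
      exact (Hstrip_mem_iff hα hβ hu t).2 hc
  · rw [Set.indicator_of_mem, if_neg hc]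
    · norm_num
    · rw [Set.mem_compl_iff]
      intro hmem
      exact hc ((Hstrip_mem_iff hα hβ hu t).1 hmem)

lemma Lwidth_total : (∫ t in Ioc (0:ℝ) 1, Lwidth α β t) = β := by
  have hswap : (∫ t in Ioc (0:ℝ) 1, ∫ s in Ioc (0:ℝ) 1, eStrip α β s t)
      = ∫ s in Ioc (0:ℝ) 1, ∫ t in Ioc (0:ℝ) 1, eStrip α β s t := by
    apply MeasureTheory.integral_integral_swap
    refine ⟨?_, ?_⟩
    · exact (((eStrip_meas (α := α) (β := β)).comp measurable_swap).aestronglyMeasurable)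
    · apply HasFiniteIntegral.of_bounded (C := 1)
      filter_upwards with p
      rw [Function.uncurry, Real.norm_eq_abs, abs_le]
      exact ⟨by linarith [eStrip_nonneg (α := α) (β := β) p.2 p.1],
        eStrip_le_one (α := α) (β := β) p.2 p.1⟩
  calc (∫ t in Ioc (0:ℝ) 1, Lwidth α β t)
      = ∫ t in Ioc (0:ℝ) 1, ∫ s in Ioc (0:ℝ) 1, eStrip α β s t := by
        apply integral_congr_ae
        filter_upwards with t
        exact Lwidth_eq t
    _ = ∫ s in Ioc (0:ℝ) 1, ∫ t in Ioc (0:ℝ) 1, eStrip α β s t := hswap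
    _ = ∫ s in Ioc (0:ℝ) 1, β := by
        apply integral_congr_ae
        filter_upwards with s
        exact slice_t hα hβ s
    _ = β := by
        rw [setIntegral_const, smul_eq_mul]
        simp

omit hα hβ in
lemma Lwidth_meas : Measurable (Lwidth α β) := by
  have h1 : StronglyMeasurable (Function.uncurry fun t s => eStrip α β s t) :=
    ((eStrip_meas (α := α) (β := β)).comp measurable_swap).stronglyMeasurable
  have h2 := h1.integral_prod_right (ν := volume.restrict (Ioc (0:ℝ) 1))
  have h3 : Lwidth α β = fun t => ∫ s in Ioc (0:ℝ) 1, eStrip α β s t := by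
    funext t; exact Lwidth_eq t
  rw [h3]
  exact h2.measurable

lemma fT_pos (t : ℝ) : 0 < fT α β t := by
  have hb : (0:ℝ) < 1 - β := by linarith [hβ.2]
  have h1 := Lwidth_le hα hβ t
  have h2 := Mb_lt_one hα hβ
  unfold fT
  apply div_pos (by linarith) hb

lemma fT_ge (t : ℝ) : (1 - Mb α β) / (1 - β) ≤ fT α β t := by
  have hb : (0:ℝ) < 1 - β := by linarith [hβ.2]
  have h1 := Lwidth_le hα hβ t
  unfold fT
  exact div_le_div_of_nonneg_right (by linarith) hb.le

lemma fT_le (t : ℝ) : fT α β t ≤ 1 / (1 - β) := by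
  have hb : (0:ℝ) < 1 - β := by linarith [hβ.2]
  have h1 := Lwidth_nonneg hα hβ t
  unfold fT
  exact div_le_div_of_nonneg_right (by linarith) hb.le

omit hα hβ in
lemma fT_meas : Measurable (fT α β) :=
  ((measurable_const.sub (Lwidth_meas (α := α) (β := β))).div_const _)

lemma fT_abs_le (t : ℝ) : |fT α β t| ≤ 1 / (1 - β) := by
  rw [abs_le]
  exact ⟨by linarith [fT_pos hα hβ t, fT_le hα hβ t,
    div_nonneg (le_of_lt (by linarith [hβ.2] : (0:ℝ) < 1 - β)) (by norm_num : (0:ℝ) ≤ 1)],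
    fT_le hα hβ t⟩

lemma fT_intInt (a b : ℝ) : IntervalIntegrable (fT α β) volume a b := by
  constructor <;>
  · refine ⟨(fT_meas (α := α) (β := β)).aestronglyMeasurable, ?_⟩
    apply HasFiniteIntegral.of_bounded (C := 1/(1-β))
    exact ae_of_all _ fun x => fT_abs_le hα hβ x

end L2





/-- globally monotone version of the quantile function. -/
def gQ (α β v : ℝ) : ℝ := sInf {x : ℝ | x ∈ Icc (0:ℝ) 1 ∧ min v 1 ≤ FT α β x}

section L3
variable {α β : ℝ} (hα : α ∈ Ico (0:ℝ) (1/2)) (hβ : β ∈ Ico (0:ℝ) (1/2))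
include hα hβ

omit hα hβ in
lemma FT_zero : FT α β 0 = 0 := intervalIntegral.integral_same

lemma FT_diff {a b : ℝ} : FT α β b - FT α β a = ∫ x in a..b, fT α β x := by
  have h := intervalIntegral.integral_add_adjacent_intervals
    (fT_intInt hα hβ 0 a) (fT_intInt hα hβ a b)
  unfold FT
  linarith

lemma FT_strictMono : StrictMono (FT α β) := by
  intro a b hab
  have hb : (0:ℝ) < 1 - β := by linarith [hβ.2]
  have hc : (0:ℝ) < (1 - Mb α β) / (1 - β) :=
    div_pos (by linarith [Mb_lt_one hα hβ]) hb
  have h1 : (b - a) • ((1 - Mb α β) / (1 - β)) ≤ ∫ x in a..b, fT α β x := by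
    rw [← intervalIntegral.integral_const]
    apply intervalIntegral.integral_mono_on hab.le intervalIntegrable_const
      (fT_intInt hα hβ a b)
    intro x _
    exact fT_ge hα hβ x
  have h2 : 0 < (b - a) • ((1 - Mb α β) / (1 - β)) := by
    rw [smul_eq_mul]
    exact mul_pos (by linarith) hc
  have := FT_diff hα hβ (a := a) (b := b)
  linarith

lemma FT_mono : Monotone (FT α β) := (FT_strictMono hα hβ).monotone

lemma FT_one : FT α β 1 = 1 := by
  have hb : (0:ℝ) < 1 - β := by linarith [hβ.2]
  have hL : Integrable (Lwidth α β) (volume.restrict (Ioc (0:ℝ) 1)) := by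
    refine ⟨(Lwidth_meas (α := α) (β := β)).aestronglyMeasurable, ?_⟩
    apply HasFiniteIntegral.of_bounded (C := Mb α β)
    filter_upwards with t
    rw [Real.norm_eq_abs, abs_le]
    exact ⟨by linarith [Lwidth_nonneg hα hβ t, Mb_nonneg hα hβ], Lwidth_le hα hβ t⟩
  have : FT α β 1 = ∫ t in Ioc (0:ℝ) 1, (1 - Lwidth α β t) / (1 - β) := by
    rw [FT, intervalIntegral.integral_of_le (by norm_num)]
    rfl
  rw [this]
  have heq : ∀ t, (1 - Lwidth α β t) / (1 - β) = (1/(1-β)) * (1 - Lwidth α β t) := by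
    intro t; field_simp
  simp_rw [heq]
  rw [integral_const_mul, integral_sub (integrable_const 1) hL]
  rw [setIntegral_const, Lwidth_total hα hβ]
  simp only [smul_eq_mul, mul_one, measureReal_def, Real.volume_Ioc]
  rw [ENNReal.toReal_ofReal (by norm_num)]
  field_simp
  ring

lemma FT_cont : Continuous (FT α β) :=
  intervalIntegral.continuous_primitive (fun a b => fT_intInt hα hβ a b) 0

lemma FT_mem {x : ℝ} (hx : x ∈ Icc (0:ℝ) 1) : FT α β x ∈ Icc (0:ℝ) 1 := by
  constructor
  · rw [← FT_zero (α := α) (β := β)]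
    exact FT_mono hα hβ hx.1
  · rw [← FT_one hα hβ]
    exact FT_mono hα hβ hx.2

lemma Aset_nonempty {v : ℝ} (hv : v ≤ 1) :
    Set.Nonempty {x : ℝ | x ∈ Icc (0:ℝ) 1 ∧ v ≤ FT α β x} := by
  refine ⟨1, ?_, ?_⟩
  · exact ⟨by norm_num, le_refl 1⟩
  · rw [FT_one hα hβ]; exact hv

omit hα hβ in
lemma Aset_bddBelow (v : ℝ) :
    BddBelow {x : ℝ | x ∈ Icc (0:ℝ) 1 ∧ v ≤ FT α β x} :=
  ⟨0, fun x hx => hx.1.1⟩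

lemma FTinv_mem {v : ℝ} (hv : v ≤ 1) :
    FTinv α β v ∈ Icc (0:ℝ) 1 ∧ v ≤ FT α β (FTinv α β v) := by
  have hclosed : IsClosed {x : ℝ | x ∈ Icc (0:ℝ) 1 ∧ v ≤ FT α β x} := by
    have : {x : ℝ | x ∈ Icc (0:ℝ) 1 ∧ v ≤ FT α β x}
        = Icc 0 1 ∩ (FT α β) ⁻¹' (Ici v) := by
      ext x
      simp only [Set.mem_setOf_eq, Set.mem_inter_iff, Set.mem_preimage, Set.mem_Ici]
    rw [this]
    exact isClosed_Icc.inter (isClosed_Ici.preimage (FT_cont hα hβ))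
  have := hclosed.csInf_mem (Aset_nonempty hα hβ hv) (Aset_bddBelow v)
  exact this

lemma FTinv_le {v x : ℝ} (hx : x ∈ Icc (0:ℝ) 1) (hvx : v ≤ FT α β x) :
    FTinv α β v ≤ x :=
  csInf_le (Aset_bddBelow v) ⟨hx, hvx⟩

lemma FTinv_le_iff {v x : ℝ} (hv : v ≤ 1) (hx : x ∈ Icc (0:ℝ) 1) :
    FTinv α β v ≤ x ↔ v ≤ FT α β x := by
  constructor
  · intro h
    exact le_trans (FTinv_mem hα hβ hv).2 (FT_mono hα hβ h)
  · intro h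
    exact FTinv_le hα hβ hx h

omit hα hβ in
lemma FTinv_eq_gQ {v : ℝ} (hv : v ≤ 1) : FTinv α β v = gQ α β v := by
  rw [FTinv, gQ, min_eq_left hv]

lemma FTinv_of_gt {v : ℝ} (hv : 1 < v) : FTinv α β v = 0 := by
  have : {x : ℝ | x ∈ Icc (0:ℝ) 1 ∧ v ≤ FT α β x} = ∅ := by
    ext x
    simp only [Set.mem_setOf_eq, Set.mem_empty_iff_false, iff_false, not_and]
    intro hx hvx
    exact absurd (le_trans hvx (FT_mem hα hβ hx).2) (not_le.2 hv)
  rw [FTinv, this, Real.sInf_empty]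

lemma gQ_monotone : Monotone (gQ α β) := by
  intro v1 v2 h12
  apply csInf_le_csInf (Aset_bddBelow _)
  · exact Aset_nonempty hα hβ (min_le_right _ _)
  · intro x hx
    exact ⟨hx.1, le_trans (min_le_min h12 (le_refl 1)) hx.2⟩

lemma FTinv_meas : Measurable (FTinv α β) := by
  have h1 : FTinv α β = fun v => if v ≤ 1 then gQ α β v else 0 := by
    funext v
    split_ifs with h
    · exact FTinv_eq_gQ h
    · exact FTinv_of_gt hα hβ (not_le.1 h)
  rw [h1]
  exact Measurable.ite (measurableSet_le measurable_id measurable_const)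
    (gQ_monotone hα hβ).measurable measurable_const

lemma FTinv_mem_Icc {v : ℝ} (hv : v ≤ 1) : FTinv α β v ∈ Icc (0:ℝ) 1 :=
  (FTinv_mem hα hβ hv).1

end L3

section L4
variable {α β : ℝ} (hα : α ∈ Ico (0:ℝ) (1/2)) (hβ : β ∈ Ico (0:ℝ) (1/2))
include hα hβ

lemma map_eq_withDensity :
    Measure.map (FTinv α β) (volume.restrict (Ioc (0:ℝ) 1)) =
      (volume.restrict (Ioc (0:ℝ) 1)).withDensity
        (fun t => ENNReal.ofReal (fT α β t)) := by
  have hmeas := FTinv_meas hα hβ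
  haveI : IsFiniteMeasure (Measure.map (FTinv α β) (volume.restrict (Ioc (0:ℝ) 1))) :=
    Measure.isFiniteMeasure_map _ _
  apply MeasureTheory.Measure.ext_of_Iic
  intro x
  rw [Measure.map_apply hmeas measurableSet_Iic,
    Measure.restrict_apply (hmeas measurableSet_Iic),
    withDensity_apply _ measurableSet_Iic,
    Measure.restrict_restrict measurableSet_Iic]
  rcases lt_or_ge x 0 with hx | hx
  · have h1 : FTinv α β ⁻¹' Iic x ∩ Ioc 0 1 = ∅ := by
      ext v
      simp only [Set.mem_inter_iff, Set.mem_preimage, Set.mem_Iic, Set.mem_Ioc,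
        Set.mem_empty_iff_false, iff_false, not_and, and_imp]
      intro hvx hv0 hv1
      exact absurd (le_trans (FTinv_mem_Icc hα hβ hv1).1 hvx) (not_le.2 hx)
    have h2 : Iic x ∩ Ioc (0:ℝ) 1 = ∅ := by
      ext v
      simp only [Set.mem_inter_iff, Set.mem_Iic, Set.mem_Ioc, Set.mem_empty_iff_false,
        iff_false, not_and, and_imp]
      intro hvx hv0
      linarith
    rw [h1, h2]
    simp
  rcases le_or_gt x 1 with hx1 | hx1
  · have hFT : FT α β x ∈ Icc (0:ℝ) 1 := FT_mem hα hβ ⟨hx, hx1⟩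
    have h1 : FTinv α β ⁻¹' Iic x ∩ Ioc 0 1 = Ioc 0 (FT α β x) := by
      ext v
      simp only [Set.mem_inter_iff, Set.mem_preimage, Set.mem_Iic, Set.mem_Ioc]
      constructor
      · rintro ⟨hvx, hv0, hv1⟩
        exact ⟨hv0, (FTinv_le_iff hα hβ hv1 ⟨hx, hx1⟩).1 hvx⟩
      · rintro ⟨hv0, hvF⟩
        have hv1 : v ≤ 1 := le_trans hvF hFT.2
        exact ⟨(FTinv_le_iff hα hβ hv1 ⟨hx, hx1⟩).2 hvF, hv0, hv1⟩
    have h2 : Iic x ∩ Ioc (0:ℝ) 1 = Ioc 0 x := by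
      ext v
      simp only [Set.mem_inter_iff, Set.mem_Iic, Set.mem_Ioc]
      constructor
      · rintro ⟨hvx, hv0, hv1⟩; exact ⟨hv0, hvx⟩
      · rintro ⟨hv0, hvx⟩; exact ⟨hvx, hv0, le_trans hvx hx1⟩
    rw [h1, h2, Real.volume_Ioc]
    have h3 : ENNReal.ofReal (∫ t in Ioc (0:ℝ) x, fT α β t)
        = ∫⁻ t in Ioc (0:ℝ) x, ENNReal.ofReal (fT α β t) := by
      apply ofReal_integral_eq_lintegral_ofReal
      · exact (fT_intInt hα hβ 0 x).1
      · exact ae_of_all _ fun t => (fT_pos hα hβ t).le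
    rw [← h3]
    congr 1
    rw [← intervalIntegral.integral_of_le hx, sub_zero, FT]
  · have h1 : FTinv α β ⁻¹' Iic x ∩ Ioc 0 1 = Ioc 0 1 := by
      ext v
      simp only [Set.mem_inter_iff, Set.mem_preimage, Set.mem_Iic, Set.mem_Ioc,
        and_iff_right_iff_imp, iff_self_and, and_imp]
      intro hv0 hv1
      exact le_trans (FTinv_mem_Icc hα hβ hv1).2 hx1.le
    have h2 : Iic x ∩ Ioc (0:ℝ) 1 = Ioc (0:ℝ) 1 := by
      ext v
      simp only [Set.mem_inter_iff, Set.mem_Iic, Set.mem_Ioc, and_iff_right_iff_imp,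
        iff_self_and, and_imp]
      intro hv0 hv1
      linarith
    rw [h1, h2]
    have h3 : ENNReal.ofReal (∫ t in Ioc (0:ℝ) 1, fT α β t)
        = ∫⁻ t in Ioc (0:ℝ) 1, ENNReal.ofReal (fT α β t) := by
      apply ofReal_integral_eq_lintegral_ofReal
      · exact (fT_intInt hα hβ 0 1).1
      · exact ae_of_all _ fun t => (fT_pos hα hβ t).le
    rw [← h3]
    have h4 : (∫ t in Ioc (0:ℝ) 1, fT α β t) = FT α β 1 := by
      rw [FT, intervalIntegral.integral_of_le (by norm_num : (0:ℝ) ≤ 1)]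
    rw [h4, FT_one hα hβ, Real.volume_Ioc]
    norm_num

/-- change of variables via the quantile function. -/
lemma integral_comp_FTinv {g : ℝ → ℝ} (hg : Measurable g) :
    (∫ v in Ioc (0:ℝ) 1, g (FTinv α β v)) = ∫ t in Ioc (0:ℝ) 1, fT α β t * g t := by
  have hmeas := FTinv_meas hα hβ
  have h1 : (∫ v in Ioc (0:ℝ) 1, g (FTinv α β v))
      = ∫ t, g t ∂(Measure.map (FTinv α β) (volume.restrict (Ioc (0:ℝ) 1))) := by
    rw [integral_map hmeas.aemeasurable hg.aestronglyMeasurable]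
  rw [h1, map_eq_withDensity hα hβ]
  have h2 : (fun t => ENNReal.ofReal (fT α β t))
      = (fun t => ((fT α β t).toNNReal : ENNReal)) := by
    funext t; rfl
  rw [h2, integral_withDensity_eq_integral_smul (fT_meas.real_toNNReal) g]
  apply integral_congr_ae
  filter_upwards with t
  rw [NNReal.smul_def, smul_eq_mul, Real.coe_toNNReal _ (fT_pos hα hβ t).le]

end L4



section L5
variable {α β : ℝ} (hα : α ∈ Ico (0:ℝ) (1/2)) (hβ : β ∈ Ico (0:ℝ) (1/2))
include hα hβ

omit hα hβ in
lemma Hstrip_meas : MeasurableSet (Hstrip α β) := by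
  unfold Hstrip
  have h1 : Measurable fun p : ℝ × ℝ => psiTilde α β p.1 := psiT_measurable.comp measurable_fst
  refine MeasurableSet.inter ?_ (MeasurableSet.inter ?_ (MeasurableSet.inter ?_ ?_))
  · exact (measurableSet_Icc).preimage measurable_fst
  · exact (measurableSet_Icc).preimage measurable_snd
  · exact measurableSet_le h1 measurable_snd
  · exact measurableSet_le measurable_snd (h1.add_const β)

omit hα hβ in
lemma indH_meas : Measurable fun p : ℝ × ℝ => (Hstrip α β)ᶜ.indicator (fun _ => (1:ℝ)) p :=
  measurable_const.indicator Hstrip_meas.compl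

omit hα hβ in
lemma indH_nonneg (p : ℝ × ℝ) : 0 ≤ (Hstrip α β)ᶜ.indicator (fun _ => (1:ℝ)) p :=
  Set.indicator_nonneg (fun _ _ => zero_le_one) p

omit hα hβ in
lemma indH_le_one (p : ℝ × ℝ) : (Hstrip α β)ᶜ.indicator (fun _ => (1:ℝ)) p ≤ 1 :=
  by classical rw [Set.indicator_apply]; split_ifs <;> norm_num

lemma denom_pos (t : ℝ) : 0 < (1 - β) * fT α β t :=
  mul_pos (by linarith [hβ.2]) (fT_pos hα hβ t)

lemma c_nonneg (u v : ℝ) : 0 ≤ cTwoParam α β u v :=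
  div_nonneg (indH_nonneg _) (denom_pos hα hβ _).le

lemma c_le (u v : ℝ) : cTwoParam α β u v ≤ 1 / ((1-β) * ((1 - Mb α β)/(1-β))) := by
  have hb : (0:ℝ) < 1 - β := by linarith [hβ.2]
  have hM : (0:ℝ) < (1 - Mb α β)/(1-β) := div_pos (by linarith [Mb_lt_one hα hβ]) hb
  have hd : (1-β) * ((1 - Mb α β)/(1-β)) ≤ (1-β) * fT α β (FTinv α β v) :=
    mul_le_mul_of_nonneg_left (fT_ge hα hβ _) hb.le
  unfold cTwoParam
  apply div_le_div₀ (by positivity) (indH_le_one _) (by positivity) hd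

lemma c_abs_le (u v : ℝ) : |cTwoParam α β u v| ≤ 1 / ((1-β) * ((1 - Mb α β)/(1-β))) := by
  rw [abs_of_nonneg (c_nonneg hα hβ u v)]
  exact c_le hα hβ u v

lemma c_meas : Measurable fun p : ℝ × ℝ => cTwoParam α β p.1 p.2 := by
  unfold cTwoParam
  have h0 := FTinv_meas hα hβ
  have h1 : Measurable fun p : ℝ × ℝ => (p.1, FTinv α β p.2) :=
    measurable_fst.prodMk (h0.comp measurable_snd)
  exact ((indH_meas).comp h1).div
    ((measurable_const.mul (fT_meas.comp (h0.comp measurable_snd))))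

/-- the `v`-marginal: for `u ∈ [0,1]`, `∫₀¹ c(u,v) dv = 1`. -/
lemma marginal_v {u : ℝ} (hu : u ∈ Icc (0:ℝ) 1) :
    (∫ v in (0:ℝ)..1, cTwoParam α β u v) = 1 := by
  have hb : (0:ℝ) < 1 - β := by linarith [hβ.2]
  rw [intervalIntegral.integral_of_le (by norm_num : (0:ℝ) ≤ 1)]
  have hgm : Measurable fun t =>
      ((Hstrip α β)ᶜ.indicator (fun _ => (1:ℝ)) (u, t)) / ((1 - β) * fT α β t) := by
    have h1 : Measurable fun t : ℝ => ((u : ℝ), t) := measurable_const.prodMk measurable_id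
    exact ((indH_meas).comp h1).div (measurable_const.mul fT_meas)
  have key := integral_comp_FTinv hα hβ hgm
  calc (∫ v in Ioc (0:ℝ) 1, cTwoParam α β u v)
      = ∫ t in Ioc (0:ℝ) 1, fT α β t *
          (((Hstrip α β)ᶜ.indicator (fun _ => (1:ℝ)) (u, t)) / ((1 - β) * fT α β t)) := key
    _ = ∫ t in Ioc (0:ℝ) 1, (1 - eStrip α β u t) / (1 - β) := by
        apply integral_congr_ae
        filter_upwards with t
        rw [indicator_compl_eq hα hβ hu t]
        have hft := (fT_pos hα hβ t).ne'
        field_simp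
    _ = (∫ t in Ioc (0:ℝ) 1, (1 - eStrip α β u t)) / (1 - β) := integral_div _ _
    _ = 1 := by
        rw [integral_sub (integrable_const 1) (eStrip_int_t u)]
        rw [setIntegral_const, slice_t hα hβ u]
        simp only [smul_eq_mul, mul_one, measureReal_def, Real.volume_Ioc]
        rw [ENNReal.toReal_ofReal (by norm_num)]
        field_simp
        ring

/-- the `u`-marginal: for `v ∈ [0,1]`, `∫₀¹ c(u,v) du = 1`. -/
lemma marginal_u {v : ℝ} (hv : v ∈ Icc (0:ℝ) 1) :
    (∫ u in (0:ℝ)..1, cTwoParam α β u v) = 1 := by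
  have hb : (0:ℝ) < 1 - β := by linarith [hβ.2]
  set T := FTinv α β v with hT
  have hTmem : T ∈ Icc (0:ℝ) 1 := FTinv_mem_Icc hα hβ hv.2
  have hfT := fT_pos hα hβ T
  rw [intervalIntegral.integral_of_le (by norm_num : (0:ℝ) ≤ 1)]
  have heq : ∀ u ∈ Ioc (0:ℝ) 1, cTwoParam α β u v = (1 - eStrip α β u T) / ((1-β) * fT α β T) := by
    intro u hu
    unfold cTwoParam
    rw [← hT, indicator_compl_eq hα hβ ⟨hu.1.le, hu.2⟩ T]
  calc (∫ u in Ioc (0:ℝ) 1, cTwoParam α β u v)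
      = ∫ u in Ioc (0:ℝ) 1, (1 - eStrip α β u T) / ((1-β) * fT α β T) := by
        apply setIntegral_congr_fun measurableSet_Ioc
        intro u hu
        exact heq u hu
    _ = (∫ u in Ioc (0:ℝ) 1, (1 - eStrip α β u T)) / ((1-β) * fT α β T) := integral_div _ _
    _ = (1 - Lwidth α β T) / ((1-β) * fT α β T) := by
        rw [integral_sub (integrable_const 1) (eStrip_int T)]
        rw [setIntegral_const, ← Lwidth_eq]
        simp only [smul_eq_mul, mul_one, measureReal_def, Real.volume_Ioc]
        rw [ENNReal.toReal_ofReal (by norm_num)]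
        norm_num
    _ = 1 := by
        have hL : (0:ℝ) < 1 - Lwidth α β T := by
          linarith [Lwidth_le hα hβ T, Mb_lt_one hα hβ]
        rw [fT]
        rw [show (1-β) * ((1 - Lwidth α β T)/(1-β)) = 1 - Lwidth α β T by field_simp]
        exact div_self hL.ne'

end L5



/-- inner integral of the copula. -/
def Inn (α β x v : ℝ) : ℝ := ∫ y in (0:ℝ)..v, cTwoParam α β x y

section L6
variable {α β : ℝ} (hα : α ∈ Ico (0:ℝ) (1/2)) (hβ : β ∈ Ico (0:ℝ) (1/2))
include hα hβ

lemma c_intInt_y (x a b : ℝ) : IntervalIntegrable (fun y => cTwoParam α β x y) volume a b := by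
  have hm : Measurable fun y => cTwoParam α β x y :=
    (c_meas hα hβ).comp (measurable_const.prodMk measurable_id)
  constructor <;>
  · refine ⟨hm.aestronglyMeasurable, ?_⟩
    apply HasFiniteIntegral.of_bounded (C := 1 / ((1-β) * ((1 - Mb α β)/(1-β))))
    exact ae_of_all _ fun y => c_abs_le hα hβ x y

lemma c_intInt_x (y a b : ℝ) : IntervalIntegrable (fun x => cTwoParam α β x y) volume a b := by
  have hm : Measurable fun x => cTwoParam α β x y :=
    (c_meas hα hβ).comp (measurable_id.prodMk measurable_const)
  constructor <;>
  · refine ⟨hm.aestronglyMeasurable, ?_⟩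
    apply HasFiniteIntegral.of_bounded (C := 1 / ((1-β) * ((1 - Mb α β)/(1-β))))
    exact ae_of_all _ fun x => c_abs_le hα hβ x y

lemma Inn_nonneg {v : ℝ} (hv : 0 ≤ v) (x : ℝ) : 0 ≤ Inn α β x v :=
  intervalIntegral.integral_nonneg hv (fun y _ => c_nonneg hα hβ x y)

lemma Inn_diff (x v₁ v₂ : ℝ) :
    Inn α β x v₂ - Inn α β x v₁ = ∫ y in v₁..v₂, cTwoParam α β x y := by
  have h := intervalIntegral.integral_add_adjacent_intervals
    (c_intInt_y hα hβ x 0 v₁) (c_intInt_y hα hβ x v₁ v₂)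
  unfold Inn
  linarith

lemma Inn_mono {v₁ v₂ : ℝ} (h12 : v₁ ≤ v₂) (x : ℝ) : Inn α β x v₁ ≤ Inn α β x v₂ := by
  have h := Inn_diff hα hβ x v₁ v₂
  have h2 : 0 ≤ ∫ y in v₁..v₂, cTwoParam α β x y :=
    intervalIntegral.integral_nonneg h12 (fun y _ => c_nonneg hα hβ x y)
  linarith

lemma Inn_meas {v : ℝ} (hv : 0 ≤ v) : Measurable fun x => Inn α β x v := by
  have h1 : StronglyMeasurable (Function.uncurry fun x y => cTwoParam α β x y) :=
    (c_meas hα hβ).stronglyMeasurable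
  have h2 := h1.integral_prod_right (ν := volume.restrict (Ioc (0:ℝ) v))
  have h3 : (fun x => Inn α β x v) = fun x => ∫ y in Ioc (0:ℝ) v, cTwoParam α β x y := by
    funext x
    rw [Inn, intervalIntegral.integral_of_le hv]
  rw [h3]
  exact h2.measurable

lemma Inn_abs_le {v : ℝ} (hv : v ∈ Icc (0:ℝ) 1) (x : ℝ) :
    |Inn α β x v| ≤ 1 / ((1-β) * ((1 - Mb α β)/(1-β))) := by
  have hb : (0:ℝ) < 1 - β := by linarith [hβ.2]
  have hK : (0:ℝ) < 1 / ((1-β) * ((1 - Mb α β)/(1-β))) := by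
    have hM : (0:ℝ) < (1 - Mb α β)/(1-β) := div_pos (by linarith [Mb_lt_one hα hβ]) hb
    positivity
  have h1 : ‖∫ y in (0:ℝ)..v, cTwoParam α β x y‖ ≤
      (1 / ((1-β) * ((1 - Mb α β)/(1-β)))) * |v - 0| := by
    apply intervalIntegral.norm_integral_le_of_norm_le_const
    intro y _
    rw [Real.norm_eq_abs]
    exact c_abs_le hα hβ x y
  rw [← Real.norm_eq_abs]
  refine h1.trans ?_
  rw [sub_zero, abs_of_nonneg hv.1]
  nlinarith [hv.2]

lemma Inn_intInt {v : ℝ} (hv : v ∈ Icc (0:ℝ) 1) (a b : ℝ) :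
    IntervalIntegrable (fun x => Inn α β x v) volume a b := by
  constructor <;>
  · refine ⟨(Inn_meas hα hβ hv.1).aestronglyMeasurable, ?_⟩
    apply HasFiniteIntegral.of_bounded (C := 1 / ((1-β) * ((1 - Mb α β)/(1-β))))
    exact ae_of_all _ fun x => Inn_abs_le hα hβ hv x

omit hα hβ in
lemma Inn_zero (x : ℝ) : Inn α β x 0 = 0 := intervalIntegral.integral_same

lemma Inn_one {x : ℝ} (hx : x ∈ Icc (0:ℝ) 1) : Inn α β x 1 = 1 := marginal_v hα hβ hx

omit hα hβ in
lemma CT_eq (u v : ℝ) : CTwoParam α β u v = ∫ x in (0:ℝ)..u, Inn α β x v := rfl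

lemma CT_rect {u₁ u₂ v₁ v₂ : ℝ} (hu12 : u₁ ≤ u₂) (hv12 : v₁ ≤ v₂)
    (hv₁ : v₁ ∈ Icc (0:ℝ) 1) (hv₂ : v₂ ∈ Icc (0:ℝ) 1) :
    0 ≤ CTwoParam α β u₂ v₂ - CTwoParam α β u₁ v₂ - CTwoParam α β u₂ v₁ +
      CTwoParam α β u₁ v₁ := by
  have hD : ∀ u : ℝ, CTwoParam α β u v₂ - CTwoParam α β u v₁
      = ∫ x in (0:ℝ)..u, (Inn α β x v₂ - Inn α β x v₁) := by
    intro u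
    rw [CT_eq, CT_eq, ← intervalIntegral.integral_sub (Inn_intInt hα hβ hv₂ 0 u)
      (Inn_intInt hα hβ hv₁ 0 u)]
  have hint : IntervalIntegrable (fun x => Inn α β x v₂ - Inn α β x v₁) volume u₁ u₂ :=
    (Inn_intInt hα hβ hv₂ u₁ u₂).sub (Inn_intInt hα hβ hv₁ u₁ u₂)
  have hadd := intervalIntegral.integral_add_adjacent_intervals
    ((Inn_intInt hα hβ hv₂ 0 u₁).sub (Inn_intInt hα hβ hv₁ 0 u₁)) hint
  have hnn : 0 ≤ ∫ x in u₁..u₂, (Inn α β x v₂ - Inn α β x v₁) :=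
    intervalIntegral.integral_nonneg hu12 (fun x _ => by linarith [Inn_mono hα hβ hv12 x])
  have h1 := hD u₁
  have h2 := hD u₂
  linarith

omit hα hβ in
lemma CT_u_zero (u : ℝ) : CTwoParam α β u 0 = 0 := by
  rw [CT_eq]
  have : (fun x => Inn α β x 0) = fun _ => (0:ℝ) := funext fun x => Inn_zero x
  rw [this]
  simp

omit hα hβ in
lemma CT_zero_v (v : ℝ) : CTwoParam α β 0 v = 0 := intervalIntegral.integral_same

lemma CT_u_one {u : ℝ} (hu : u ∈ Icc (0:ℝ) 1) : CTwoParam α β u 1 = u := by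
  rw [CT_eq]
  have h1 : EqOn (fun x => Inn α β x 1) (fun _ => (1:ℝ)) (uIcc (0:ℝ) u) := by
    intro x hx
    rw [uIcc_of_le hu.1] at hx
    exact Inn_one hα hβ ⟨hx.1, le_trans hx.2 hu.2⟩
  rw [intervalIntegral.integral_congr h1, intervalIntegral.integral_const, smul_eq_mul]
  ring

lemma CT_one_v {v : ℝ} (hv : v ∈ Icc (0:ℝ) 1) : CTwoParam α β 1 v = v := by
  haveI hfin : IsFiniteMeasure (volume.restrict (Ioc (0:ℝ) v)) :=
    ⟨by rw [Measure.restrict_apply_univ]; simp⟩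
  have hb : (0:ℝ) < 1 - β := by linarith [hβ.2]
  have hInt : Integrable (Function.uncurry fun x y => cTwoParam α β x y)
      ((volume.restrict (Ioc (0:ℝ) 1)).prod (volume.restrict (Ioc (0:ℝ) v))) := by
    refine ⟨(c_meas hα hβ).aestronglyMeasurable, ?_⟩
    apply HasFiniteIntegral.of_bounded (C := 1 / ((1-β) * ((1 - Mb α β)/(1-β))))
    exact ae_of_all _ fun p => c_abs_le hα hβ p.1 p.2
  have hswap := MeasureTheory.integral_integral_swap hInt
  calc CTwoParam α β 1 v
      = ∫ x in Ioc (0:ℝ) 1, ∫ y in Ioc (0:ℝ) v, cTwoParam α β x y := by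
        rw [CTwoParam, intervalIntegral.integral_of_le (by norm_num : (0:ℝ) ≤ 1)]
        apply setIntegral_congr_fun measurableSet_Ioc
        intro x _
        dsimp only
        rw [intervalIntegral.integral_of_le hv.1]
    _ = ∫ y in Ioc (0:ℝ) v, ∫ x in Ioc (0:ℝ) 1, cTwoParam α β x y := hswap
    _ = ∫ y in Ioc (0:ℝ) v, (1:ℝ) := by
        apply setIntegral_congr_fun measurableSet_Ioc
        intro y hy
        have hy1 : y ∈ Icc (0:ℝ) 1 := ⟨hy.1.le, le_trans hy.2 hv.2⟩
        have := marginal_u hα hβ hy1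
        rw [intervalIntegral.integral_of_le (by norm_num : (0:ℝ) ≤ 1)] at this
        exact this
    _ = v := by
        rw [setIntegral_const, smul_eq_mul, mul_one, measureReal_def, Real.volume_Ioc,
          ENNReal.toReal_ofReal (by linarith [hv.1])]
        ring

lemma CT_nonneg {u v : ℝ} (hu : u ∈ Icc (0:ℝ) 1) (hv : v ∈ Icc (0:ℝ) 1) :
    0 ≤ CTwoParam α β u v := by
  rw [CT_eq]
  exact intervalIntegral.integral_nonneg hu.1 (fun x _ => Inn_nonneg hα hβ hv.1 x)

lemma CT_le_one {u v : ℝ} (hu : u ∈ Icc (0:ℝ) 1) (hv : v ∈ Icc (0:ℝ) 1) :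
    CTwoParam α β u v ≤ 1 := by
  have h1 : CTwoParam α β u v ≤ CTwoParam α β u 1 := by
    rw [CT_eq, CT_eq]
    apply intervalIntegral.integral_mono_on hu.1 (Inn_intInt hα hβ hv 0 u)
      (Inn_intInt hα hβ (by norm_num) 0 u)
    intro x _
    exact Inn_mono hα hβ hv.2 x
  rw [CT_u_one hα hβ hu] at h1
  linarith [hu.2]

end L6

theorem cTwoParam_is_copula_density' (α β : ℝ)
    (hα : α ∈ Ico (0:ℝ) (1/2)) (hβ : β ∈ Ico (0:ℝ) (1/2)) :
    (∀ u ∈ Icc (0:ℝ) 1, ∀ v ∈ Icc (0:ℝ) 1, 0 ≤ cTwoParam α β u v) ∧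
    (∀ u ∈ Icc (0:ℝ) 1, (∫ v in (0:ℝ)..1, cTwoParam α β u v) = 1) ∧
    (∀ v ∈ Icc (0:ℝ) 1, (∫ u in (0:ℝ)..1, cTwoParam α β u v) = 1) ∧
    ((∀ u ∈ Icc (0:ℝ) 1, ∀ v ∈ Icc (0:ℝ) 1, CTwoParam α β u v ∈ Icc (0:ℝ) 1) ∧
    (∀ u ∈ Icc (0:ℝ) 1, CTwoParam α β u 0 = 0 ∧ CTwoParam α β u 1 = u) ∧
    (∀ v ∈ Icc (0:ℝ) 1, CTwoParam α β 0 v = 0 ∧ CTwoParam α β 1 v = v) ∧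
    (∀ u₁ ∈ Icc (0:ℝ) 1, ∀ u₂ ∈ Icc (0:ℝ) 1, ∀ v₁ ∈ Icc (0:ℝ) 1, ∀ v₂ ∈ Icc (0:ℝ) 1,
      u₁ ≤ u₂ → v₁ ≤ v₂ → 0 ≤ CTwoParam α β u₂ v₂ - CTwoParam α β u₁ v₂ -
        CTwoParam α β u₂ v₁ + CTwoParam α β u₁ v₁)) := by
  refine ⟨fun u _ v _ => c_nonneg hα hβ u v,
    fun u hu => marginal_v hα hβ hu,
    fun v hv => marginal_u hα hβ hv,
    fun u hu v hv => ⟨CT_nonneg hα hβ hu hv, CT_le_one hα hβ hu hv⟩,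
    fun u hu => ⟨CT_u_zero u, CT_u_one hα hβ hu⟩,
    fun v hv => ⟨CT_zero_v v, CT_one_v hα hβ hv⟩,
    fun u₁ _ u₂ _ v₁ hv₁ v₂ hv₂ h12 hv12 => CT_rect hα hβ h12 hv12 hv₁ hv₂⟩


/-- For `α, β ∈ [0, 1/2)`, `c_{α,β}` is a valid copula density:
non-negative with uniform marginals, so that `C_{α,β}` is a bivariate copula. -/
theorem cTwoParam_is_copula_density (α β : ℝ)
    (hα : α ∈ Ico (0:ℝ) (1/2)) (hβ : β ∈ Ico (0:ℝ) (1/2)) :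
    (∀ u ∈ Icc (0:ℝ) 1, ∀ v ∈ Icc (0:ℝ) 1, 0 ≤ cTwoParam α β u v) ∧
    (∀ u ∈ Icc (0:ℝ) 1, (∫ v in (0:ℝ)..1, cTwoParam α β u v) = 1) ∧
    (∀ v ∈ Icc (0:ℝ) 1, (∫ u in (0:ℝ)..1, cTwoParam α β u v) = 1) ∧
    IsCopula (CTwoParam α β) := by
  obtain ⟨h1, h2, h3, h4, h5, h6, h7⟩ := cTwoParam_is_copula_density' α β hα hβ
  exact ⟨h1, h2, h3, h4, h5, h6, h7⟩
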